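/- arXiv:1712.03196 — 3 statements merged into one kernel-verified Lean document; each statement's English description precedes it below -/
import Mathlib

section
/- If Ω is a right adjoint to a graph functor that is itself a right adjoint, and K is a multiplicative graph, then Ω(K) is multiplicative. -/
/-- A finite graph: symmetric edge relation, loops allowed. -/
structure LoopGraph where
  V : Type
  Adj : V → V → Prop
  symm : ∀ {u v : V}, Adj u v → Adj v u
  [fin : Finite V]

attribute [instance] LoopGraph.fin

/-- Existence of a graph homomorphism. -/
def LoopGraph.Hom (G H : LoopGraph) : Prop :=
  ∃ f : G.V → H.V, ∀ {u v : G.V}, G.Adj u v → H.Adj (f u) (f v)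

/-- Homomorphic equivalence. -/
def LoopGraph.HomEquiv (G H : LoopGraph) : Prop := G.Hom H ∧ H.Hom G

/-- Tensor (categorical) product of graphs. -/
def LoopGraph.prod (G H : LoopGraph) : LoopGraph where
  V := G.V × H.V
  Adj := fun a b => G.Adj a.1 b.1 ∧ H.Adj a.2 b.2
  symm := fun h => ⟨G.symm h.1, H.symm h.2⟩

/-- A walk of length `n` from `u` to `v`. -/
def LoopGraph.Walk (G : LoopGraph) (n : ℕ) (u v : G.V) : Prop :=
  ∃ w : ℕ → G.V, w 0 = u ∧ w n = v ∧ ∀ i < n, G.Adj (w i) (w (i+1))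

/-- The `k`-th power graph `Γ_k(G)`. -/
def LoopGraph.pow (G : LoopGraph) (k : ℕ) : LoopGraph where
  V := G.V
  Adj := fun u v => G.Walk k u v
  symm := by
    rintro u v ⟨w, h0, hk, hadj⟩
    refine ⟨fun i => w (k - i), by simpa using hk, by simpa using h0, fun i hi => ?_⟩
    have h1 : k - (i+1) + 1 = k - i := by omega
    have h2 := hadj (k - (i+1)) (by omega)
    rw [h1] at h2
    exact G.symm h2

/-- Raw vertices for the `k`-subdivision: original vertices plus internal path
vertices `(u,v,i)` with `uv` an edge and `0 < i < k`. -/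
abbrev LoopGraph.SubdivRaw (G : LoopGraph) (k : ℕ) : Type :=
  G.V ⊕ {p : G.V × G.V × Fin (k+1) // G.Adj p.1 p.2.1 ∧ 0 < p.2.2.val ∧ p.2.2.val < k}

/-- Identification `(u,v,i) ~ (v,u,k-i)` of internal vertices. -/
def LoopGraph.subdivRel (G : LoopGraph) (k : ℕ) : G.SubdivRaw k → G.SubdivRaw k → Prop :=
  fun a b => ∃ p q, a = Sum.inr p ∧ b = Sum.inr q ∧
    p.1.1 = q.1.2.1 ∧ p.1.2.1 = q.1.1 ∧ p.1.2.2.val + q.1.2.2.val = k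

/-- Adjacency on raw subdivision vertices. -/
def LoopGraph.subdivAdjRaw (G : LoopGraph) (k : ℕ) : G.SubdivRaw k → G.SubdivRaw k → Prop := fun a b =>
  match a, b with
  | .inl u, .inl v => k = 1 ∧ G.Adj u v
  | .inl u, .inr p => (p.1.1 = u ∧ p.1.2.2.val = 1) ∨ (p.1.2.1 = u ∧ p.1.2.2.val = k - 1)
  | .inr p, .inl u => (p.1.1 = u ∧ p.1.2.2.val = 1) ∨ (p.1.2.1 = u ∧ p.1.2.2.val = k - 1)
  | .inr p, .inr q =>
      (p.1.1 = q.1.1 ∧ p.1.2.1 = q.1.2.1 ∧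
        (p.1.2.2.val + 1 = q.1.2.2.val ∨ q.1.2.2.val + 1 = p.1.2.2.val)) ∨
      (p.1.1 = q.1.2.1 ∧ p.1.2.1 = q.1.1 ∧
        (p.1.2.2.val + q.1.2.2.val = k + 1 ∨ p.1.2.2.val + q.1.2.2.val = k - 1))

/-- The `k`-subdivision `Λ_k(G)`: every edge replaced by a path with `k` edges. -/
def LoopGraph.subdiv (G : LoopGraph) (k : ℕ) : LoopGraph where
  V := Quot (G.subdivRel k)
  Adj := fun x y => ∃ a b, Quot.mk _ a = x ∧ Quot.mk _ b = y ∧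
    (G.subdivAdjRaw k a b ∨ G.subdivAdjRaw k b a)
  symm := fun ⟨a, b, ha, hb, h⟩ => ⟨b, a, hb, ha, h.symm⟩

/-- `A` joined to `B`: every vertex of `A` adjacent to every vertex of `B`. -/
def LoopGraph.Join (G : LoopGraph) (A B : Set G.V) : Prop := ∀ a ∈ A, ∀ b ∈ B, G.Adj a b

/-- Vertices of `Ω_{2ℓ+1}(G)`: tuples `(A_0, …, A_ℓ)` of vertex subsets with `A_0`
a singleton and `A_{i-1}` joined to `A_i`. -/
abbrev LoopGraph.OmegaVert (G : LoopGraph) (l : ℕ) : Type :=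
  {A : Fin (l+1) → Set G.V //
    (∃ v, A 0 = {v}) ∧ ∀ i : Fin l, G.Join (A i.castSucc) (A i.succ)}

/-- The graph `Ω_{2ℓ+1}(G)`, right adjoint to the `(2ℓ+1)`-st power functor. -/
def LoopGraph.omega (G : LoopGraph) (l : ℕ) : LoopGraph where
  V := G.OmegaVert l
  Adj := fun A B =>
    (∀ i : Fin l, A.1 i.castSucc ⊆ B.1 i.succ ∧ B.1 i.castSucc ⊆ A.1 i.succ) ∧
    G.Join (A.1 (Fin.last l)) (B.1 (Fin.last l))
  symm := fun {A B} h =>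
    ⟨fun i => ⟨(h.1 i).2, (h.1 i).1⟩, fun b hb a ha => G.symm (h.2 a ha b hb)⟩

/-- A multiplicative graph. -/
def LoopGraph.Multiplicative (K : LoopGraph) : Prop :=
  ∀ G H : LoopGraph, (G.prod H).Hom K → G.Hom K ∨ H.Hom K

/-- A (thin) graph functor. -/
def IsGraphFunctor (F : LoopGraph → LoopGraph) : Prop :=
  ∀ G H : LoopGraph, G.Hom H → (F G).Hom (F H)

/-! A right adjoint `Γ` sends products into products: the projections `ΓG × ΓH → ΓG`, `ΓG × ΓH → ΓH`
transpose to maps `Λ(ΓG × ΓH) → G, H`, hence to `Λ(ΓG × ΓH) → G × H`, which transposes back to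
`ΓG × ΓH → Γ(G × H)`. So a map `G × H → ΩK` transposes along `Γ ⊣ Ω` to `ΓG × ΓH → K`, where
multiplicativity of `K` applies. -/

namespace LoopGraph

theorem Hom.trans {G H K : LoopGraph} : G.Hom H → H.Hom K → G.Hom K
  | ⟨f, hf⟩, ⟨g, hg⟩ => ⟨g ∘ f, fun h => hg (hf h)⟩

theorem prod_hom_left (G H : LoopGraph) : (G.prod H).Hom G :=
  ⟨Prod.fst, fun h => h.1⟩

theorem prod_hom_right (G H : LoopGraph) : (G.prod H).Hom H :=
  ⟨Prod.snd, fun h => h.2⟩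

theorem Hom.prod {X G H : LoopGraph} : X.Hom G → X.Hom H → X.Hom (G.prod H)
  | ⟨f, hf⟩, ⟨g, hg⟩ => ⟨fun v => (f v, g v), fun h => ⟨hf h, hg h⟩⟩

theorem prod_hom_prod_of_adjunction {Λ Γ : LoopGraph → LoopGraph}
    (hadj : ∀ G H : LoopGraph, (Λ G).Hom H ↔ G.Hom (Γ H)) (G H : LoopGraph) :
    ((Γ G).prod (Γ H)).Hom (Γ (G.prod H)) :=
  (hadj _ _).1 <| Hom.prod ((hadj _ _).2 (prod_hom_left _ _)) ((hadj _ _).2 (prod_hom_right _ _))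

theorem Multiplicative.of_adjunction {Γ Ω : LoopGraph → LoopGraph}
    (hadj : ∀ G H : LoopGraph, (Γ G).Hom H ↔ G.Hom (Ω H))
    (hprod : ∀ G H : LoopGraph, ((Γ G).prod (Γ H)).Hom (Γ (G.prod H)))
    {K : LoopGraph} (hK : K.Multiplicative) : (Ω K).Multiplicative := by
  intro G H hGH
  have hΓK : ((Γ G).prod (Γ H)).Hom K := (hprod G H).trans ((hadj _ _).2 hGH)
  exact (hK _ _ hΓK).imp (hadj _ _).1 (hadj _ _).1

end LoopGraph

theorem right_adjoint_of_right_adjoint_multiplicative_general (Λ Γ Ω : LoopGraph → LoopGraph)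
    (hadj1 : ∀ G H : LoopGraph, (Λ G).Hom H ↔ G.Hom (Γ H))
    (hadj2 : ∀ G H : LoopGraph, (Γ G).Hom H ↔ G.Hom (Ω H))
    (K : LoopGraph) (hK : K.Multiplicative) :
    (Ω K).Multiplicative :=
  hK.of_adjunction hadj2 (LoopGraph.prod_hom_prod_of_adjunction hadj1)

/-- a right adjoint of a right adjoint preserves multiplicativity. -/
theorem right_adjoint_of_right_adjoint_multiplicative (Λ Γ Ω : LoopGraph → LoopGraph)
    (hΛ : IsGraphFunctor Λ) (hΓ : IsGraphFunctor Γ) (hΩ : IsGraphFunctor Ω)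
    (hadj1 : ∀ G H : LoopGraph, (Λ G).Hom H ↔ G.Hom (Γ H))
    (hadj2 : ∀ G H : LoopGraph, (Γ G).Hom H ↔ G.Hom (Ω H))
    (K : LoopGraph) (hK : K.Multiplicative) :
    (Ω K).Multiplicative :=
  right_adjoint_of_right_adjoint_multiplicative_general Λ Γ Ω hadj1 hadj2 K hK
end

section
/- The k-th power functor Γ_k is left adjoint to Ω_k for odd k = 2ℓ+1: for all graphs G, H, there is a homomorphism Γ_k(G) → H if and only if there is a homomorphism G → Ω_k(H). -/
/-!
A homomorphism `f : Γ_{2ℓ+1}(G) → H` sends `u` to the tuple whose `i`-th entry is the `f`-image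
of the vertices reachable from `u` by a walk of length exactly `i`; consecutive entries are
joined because a walk of length `2i+1` can be padded to length `2ℓ+1` by going back and forth
along an edge. Conversely, for `g : G → Ω_{2ℓ+1}(H)` send `u` to the root of `g u` (the element of
its singleton entry `A_0`): along a walk of length `i ≤ ℓ` from `u` to `x` that root propagates into
the `i`-th entry of `g x`, and a walk of length `2ℓ+1` is two such walks of length `ℓ`, one from
each end, meeting at an edge, where the last-entry join condition applies.
-/

namespace LoopGraph

section Walks

variable {G : LoopGraph} {m n : ℕ} {u v x : G.V}

theorem walk_zero_iff : G.Walk 0 u v ↔ u = v := by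
  constructor
  · rintro ⟨w, h0, hv, -⟩
    rw [← h0, hv]
  · rintro rfl
    exact ⟨fun _ => u, rfl, rfl, fun i hi => absurd hi (Nat.not_lt_zero i)⟩

theorem walk_succ_iff : G.Walk (n + 1) u v ↔ ∃ x, G.Adj u x ∧ G.Walk n x v := by
  constructor
  · rintro ⟨w, rfl, hv, hw⟩
    exact ⟨w 1, hw 0 n.succ_pos, fun i => w (i + 1), rfl, hv, fun i hi => hw (i + 1) (by omega)⟩
  · rintro ⟨x, hux, w, rfl, hv, hw⟩
    refine ⟨fun | 0 => u | i + 1 => w i, rfl, hv, fun i hi => ?_⟩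
    cases i with
    | zero => exact hux
    | succ i => exact hw i (by omega)

theorem walk_add_iff : G.Walk (m + n) u v ↔ ∃ x, G.Walk m u x ∧ G.Walk n x v := by
  induction m generalizing u with
  | zero => simp [walk_zero_iff]
  | succ m ih =>
    rw [Nat.succ_add, walk_succ_iff]
    simp only [ih, walk_succ_iff]
    exact ⟨fun ⟨y, hy, x, hx, hxv⟩ => ⟨x, ⟨y, hy, hx⟩, hxv⟩,
      fun ⟨x, ⟨y, hy, hx⟩, hxv⟩ => ⟨y, hy, x, hx, hxv⟩⟩

theorem walk_one_iff : G.Walk 1 u v ↔ G.Adj u v := by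
  simp [walk_succ_iff, walk_zero_iff]

theorem Walk.symm (h : G.Walk n u v) : G.Walk n v u := (G.pow n).symm h

theorem Walk.append (h₁ : G.Walk m u x) (h₂ : G.Walk n x v) : G.Walk (m + n) u v :=
  walk_add_iff.2 ⟨x, h₁, h₂⟩

theorem walk_two_mul_of_adj (h : G.Adj u x) (m : ℕ) : G.Walk (2 * m) u u := by
  induction m with
  | zero => exact walk_zero_iff.2 rfl
  | succ m ih =>
    rw [show 2 * (m + 1) = 2 * m + 1 + 1 by ring]
    exact walk_succ_iff.2 ⟨x, h, walk_succ_iff.2 ⟨u, G.symm h, ih⟩⟩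

end Walks

def walkSet (G : LoopGraph) (u : G.V) (n : ℕ) : Set G.V := {x | G.Walk n u x}

section WalkSet

variable {G : LoopGraph} {i l n : ℕ} {u v x y : G.V}

theorem walkSet_zero : G.walkSet u 0 = {u} := Set.ext fun _ => walk_zero_iff.trans eq_comm

theorem walkSet_subset_walkSet_succ (h : G.Adj u v) : G.walkSet u n ⊆ G.walkSet v (n + 1) :=
  fun _ hx => walk_succ_iff.2 ⟨u, G.symm h, hx⟩

theorem walk_of_mem_walkSet_of_mem_walkSet_succ (hx : x ∈ G.walkSet u i)
    (hy : y ∈ G.walkSet u (i + 1)) (hil : i ≤ l) : G.Walk (2 * l + 1) x y := by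
  obtain ⟨z, huz, -⟩ := walk_succ_iff.1 hy
  have := (hx.symm.append (walk_two_mul_of_adj huz (l - i))).append hy
  rwa [show i + 2 * (l - i) + (i + 1) = 2 * l + 1 by omega] at this

theorem walk_of_mem_walkSet_of_adj (hx : x ∈ G.walkSet u l) (huv : G.Adj u v)
    (hy : y ∈ G.walkSet v l) : G.Walk (2 * l + 1) x y := by
  have := (hx.symm.append (walk_one_iff.2 huv)).append hy
  rwa [show l + 1 + l = 2 * l + 1 by ring] at this

end WalkSet

section Adjunction

variable {G H : LoopGraph} {l : ℕ}

theorem join_image_of_walk {k : ℕ} {f : G.V → H.V}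
    (hf : ∀ {x y}, G.Walk k x y → H.Adj (f x) (f y)) {S T : Set G.V}
    (hST : ∀ x ∈ S, ∀ y ∈ T, G.Walk k x y) : H.Join (f '' S) (f '' T) := by
  rintro _ ⟨x, hx, rfl⟩ _ ⟨y, hy, rfl⟩
  exact hf (hST x hx y hy)

def omegaVertOfPowHom (f : G.V → H.V) (hf : ∀ {x y}, G.Walk (2 * l + 1) x y → H.Adj (f x) (f y))
    (u : G.V) : H.OmegaVert l :=
  ⟨fun i => f '' G.walkSet u i,
    ⟨f u, show f '' G.walkSet u 0 = _ by rw [walkSet_zero, Set.image_singleton]⟩,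
    fun i => join_image_of_walk hf fun _ hx _ hy =>
      walk_of_mem_walkSet_of_mem_walkSet_succ hx hy i.is_lt.le⟩

theorem omegaVertOfPowHom_adj (f : G.V → H.V)
    (hf : ∀ {x y}, G.Walk (2 * l + 1) x y → H.Adj (f x) (f y)) {u v : G.V} (huv : G.Adj u v) :
    (H.omega l).Adj (omegaVertOfPowHom f hf u) (omegaVertOfPowHom f hf v) :=
  ⟨fun _ => ⟨Set.image_mono (walkSet_subset_walkSet_succ huv),
      Set.image_mono (walkSet_subset_walkSet_succ (G.symm huv))⟩,
    join_image_of_walk hf fun _ hx _ hy => walk_of_mem_walkSet_of_adj hx huv hy⟩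

noncomputable def OmegaVert.root (A : H.OmegaVert l) : H.V := A.2.1.choose

theorem OmegaVert.root_spec (A : H.OmegaVert l) : A.1 0 = {A.root} := A.2.1.choose_spec

variable {g : G.V → H.OmegaVert l} (hg : ∀ {u v}, G.Adj u v → (H.omega l).Adj (g u) (g v))
include hg

theorem root_mem_of_walk {u : G.V} (i : Fin (l + 1)) {x : G.V} (hx : G.Walk i u x) :
    (g u).root ∈ (g x).1 i := by
  induction i using Fin.induction generalizing x with
  | zero =>
    rw [walk_zero_iff.1 hx, OmegaVert.root_spec]
    rfl
  | succ i ih =>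
    rw [Fin.val_succ, walk_add_iff] at hx
    obtain ⟨y, huy, hyx⟩ := hx
    exact ((hg (walk_one_iff.1 hyx)).1 i).1 (ih huy)

theorem root_adj_root_of_walk {u v : G.V} (huv : G.Walk (2 * l + 1) u v) :
    H.Adj (g u).root (g v).root := by
  rw [show 2 * l + 1 = l + (1 + l) by ring, walk_add_iff] at huv
  obtain ⟨x, hux, hxv⟩ := huv
  obtain ⟨y, hxy, hyv⟩ := walk_add_iff.1 hxv
  exact (hg (walk_one_iff.1 hxy)).2 _ (root_mem_of_walk hg (Fin.last l) hux)
    _ (root_mem_of_walk hg (Fin.last l) hyv.symm)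

end Adjunction

end LoopGraph

/-- the power functor `Γ_{2ℓ+1}` is left adjoint to `Ω_{2ℓ+1}`. -/
theorem pow_omega_adjoint (l : ℕ) (G H : LoopGraph) :
    (G.pow (2*l+1)).Hom H ↔ G.Hom (H.omega l) :=
  ⟨fun ⟨f, hf⟩ => ⟨LoopGraph.omegaVertOfPowHom (G := G) f hf,
      LoopGraph.omegaVertOfPowHom_adj (G := G) f hf⟩,
    fun ⟨g, hg⟩ => ⟨fun u => (g u).root, LoopGraph.root_adj_root_of_walk hg⟩⟩
end

section
/- For a Z/2-space X, there exists a Z/2-equivariant continuous map from the circle S^1 (with antipodal involution) to X if and only if X does not admit a Z/2-equivariant continuous map to S^0 = {-1,1} (with the swap involution). Here existence of a path from some point x to its involution image ν(x) is the intermediate characterization. -/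
/-- A `ℤ/2`-space: a topological space with a continuous involution. -/
structure Z2Space where
  carrier : Type
  [top : TopologicalSpace carrier]
  ν : carrier → carrier
  cont : Continuous ν
  invol : ∀ x, ν (ν x) = x

attribute [instance] Z2Space.top

/-- A free `ℤ/2`-space: the involution has no fixed points. -/
def Z2Space.Free (X : Z2Space) : Prop := ∀ x, X.ν x ≠ x

/-- Existence of a `ℤ/2`-equivariant continuous map. -/
def Z2Map (X Y : Z2Space) : Prop :=
  ∃ f : X.carrier → Y.carrier, Continuous f ∧ ∀ x, f (X.ν x) = Y.ν (f x)

/-- Product of `ℤ/2`-spaces, with the diagonal involution. -/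
def Z2Space.prod (X Y : Z2Space) : Z2Space where
  carrier := X.carrier × Y.carrier
  ν := fun p => (X.ν p.1, Y.ν p.2)
  cont := (X.cont.comp continuous_fst).prodMk (Y.cont.comp continuous_snd)
  invol := fun p => by simp [X.invol, Y.invol]

/-- The 0-sphere `S⁰ = {-1, 1} ⊆ ℝ` with the involution `x ↦ -x`. -/
noncomputable def S0 : Z2Space where
  carrier := {x : ℝ // x = -1 ∨ x = 1}
  ν := fun x => ⟨-x.1, by rcases x.2 with h | h <;> simp [h]⟩
  cont := Continuous.subtype_mk (continuous_neg.comp continuous_subtype_val)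
    (fun x => by rcases x.2 with h | h <;> simp [h])
  invol := fun x => Subtype.ext (neg_neg _)

/-- The circle `S¹`: the unit sphere in the Euclidean plane with the antipodal
involution `x ↦ -x`. -/
noncomputable def S1 : Z2Space where
  carrier := {x : EuclideanSpace ℝ (Fin 2) // ‖x‖ = 1}
  ν := fun x => ⟨-x.1, by rw [norm_neg]; exact x.2⟩
  cont := Continuous.subtype_mk (continuous_neg.comp continuous_subtype_val)
    (fun x => by simp [x.2])
  invol := fun x => Subtype.ext (neg_neg _)

/-! A `ℤ/2`-map `S¹ → X` exists iff some point `x` is joined by a path to `ν x`: the circle is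
path connected, and conversely a path from `x` to `ν x` on the upper half circle, glued with its
`ν`-image on the lower half, is equivariant. Equivariant maps carry such paths forward and the
discrete space `S⁰` has none, so a map `S¹ → X` excludes a map `X → S⁰`. If no point is joined
to its image, `ν` acts freely on the discrete space of path components of `X`, and choosing one
component from each swapped pair yields a map to `S⁰`. -/

theorem Function.Involutive.exists_bool_comp_eq_not {T : Type*} {σ : T → T}
    (hσ : Function.Involutive σ) (hfree : ∀ t, σ t ≠ t) :
    ∃ s : T → Bool, ∀ t, s (σ t) = !s t := by
  classical
  let orbit : Setoid T :=
    { r := fun a b => b = a ∨ b = σ a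
      iseqv :=
        { refl := fun _ => Or.inl rfl
          symm := by rintro a b (rfl | rfl) <;> simp [hσ _]
          trans := by rintro a b c (rfl | rfl) (rfl | rfl) <;> simp [hσ _] } }
  -- `s t` says whether `t` is the chosen representative of its orbit `{t, σ t}`.
  refine ⟨fun t => decide (t = (Quotient.mk orbit t).out), fun t => ?_⟩
  have horbit : Quotient.mk orbit (σ t) = Quotient.mk orbit t :=
    Quotient.sound (Or.inr (hσ t).symm)
  dsimp only
  rw [horbit]
  have hrep := Quotient.mk_out (s := orbit) t
  generalize (Quotient.mk orbit t).out = o at hrep ⊢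
  rcases hrep with rfl | rfl
  · simp [hfree]
  · simp [hσ o, hfree o]

namespace Z2Map

variable {X Y Z : Z2Space}

theorem trans : Z2Map X Y → Z2Map Y Z → Z2Map X Z := by
  rintro ⟨f, hf, hfν⟩ ⟨g, hg, hgν⟩
  exact ⟨g ∘ f, hg.comp hf, fun x => by simp only [Function.comp_apply, hfν, hgν]⟩

theorem exists_joined_ν (hf : Z2Map X Y) (h : ∃ x, Joined x (X.ν x)) :
    ∃ y, Joined y (Y.ν y) := by
  obtain ⟨f, hf, hfν⟩ := hf
  obtain ⟨x, hx⟩ := h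
  exact ⟨f x, hfν x ▸ hx.map hf⟩

end Z2Map

namespace Z2Space

variable {X : Z2Space}

noncomputable def zerothHomotopy (X : Z2Space) : Z2Space where
  carrier := ZerothHomotopy X.carrier
  ν := Quotient.map' X.ν fun _ _ h => h.map X.cont
  cont := X.cont.quotient_map' _
  invol := ZerothHomotopy.rec fun x => congrArg ZerothHomotopy.mk (X.invol x)

instance [LocallyPathConnectedSpace X.carrier] : DiscreteTopology X.zerothHomotopy.carrier :=
  inferInstanceAs (DiscreteTopology (ZerothHomotopy X.carrier))

theorem z2map_zerothHomotopy (X : Z2Space) : Z2Map X X.zerothHomotopy :=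
  ⟨ZerothHomotopy.mk, ZerothHomotopy.isQuotientMap_mk.continuous, fun _ => rfl⟩

theorem zerothHomotopy_free (h : ¬ ∃ x, Joined x (X.ν x)) : X.zerothHomotopy.Free :=
  ZerothHomotopy.rec fun x hx => h ⟨x, (Quotient.exact hx).symm⟩

theorem z2map_S0_of_free [DiscreteTopology X.carrier] (h : X.Free) : Z2Map X S0 := by
  obtain ⟨s, hs⟩ := Function.Involutive.exists_bool_comp_eq_not X.invol h
  refine ⟨fun x => if s x then ⟨1, Or.inr rfl⟩ else ⟨-1, Or.inl rfl⟩,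
    continuous_of_discreteTopology, fun x => ?_⟩
  dsimp only
  rw [hs]
  cases s x <;> exact Subtype.ext (by simp [S0])

end Z2Space

instance : DiscreteTopology S0.carrier :=
  have : Finite {x : ℝ // x = -1 ∨ x = 1} := (Set.toFinite {-1, 1}).to_subtype
  inferInstanceAs (DiscreteTopology {x : ℝ // x = -1 ∨ x = 1})

theorem not_exists_joined_ν_S0 : ¬ ∃ y : S0.carrier, Joined y (S0.ν y) := by
  rintro ⟨y, ⟨γ⟩⟩
  have hy : y = S0.ν y := by
    simpa using (inferInstance : PreconnectedSpace unitInterval).constant γ.continuous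
      (x := 0) (y := 1)
  rcases y with ⟨a, ha | ha⟩ <;> simp [S0, ha] at hy <;> norm_num at hy

theorem pathConnectedSpace_S1 : PathConnectedSpace S1.carrier := by
  have hrank : 1 < Module.rank ℝ (EuclideanSpace ℝ (Fin 2)) := by
    rw [← Module.finrank_eq_rank, finrank_euclideanSpace_fin]; norm_num
  have hsphere : Metric.sphere (0 : EuclideanSpace ℝ (Fin 2)) 1 = {x | ‖x‖ = 1} := by
    ext; simp
  have h := isPathConnected_iff_pathConnectedSpace.mp
    (hsphere ▸ isPathConnected_sphere hrank 0 zero_le_one)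
  exact h

theorem exists_joined_ν_S1 : ∃ v : S1.carrier, Joined v (S1.ν v) :=
  have : PathConnectedSpace S1.carrier := pathConnectedSpace_S1
  ⟨⟨EuclideanSpace.single 0 1, by simp⟩, PathConnectedSpace.joined _ _⟩

theorem sq_coord_zero_of_coord_one_eq_zero (v : S1.carrier) (hv : v.1 1 = 0) :
    v.1 0 ^ 2 = 1 := by
  have hnorm := EuclideanSpace.real_norm_sq_eq v.1
  simp only [v.2, Fin.sum_univ_two, hv] at hnorm
  linarith

theorem z2map_S1_of_apply_neg_one_eq_ν {X : Z2Space} {E : ℝ → X.carrier} (hE : Continuous E)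
    (hends : E (-1) = X.ν (E 1)) : Z2Map S1 X := by
  have hglue : ∀ a : ℝ, a ^ 2 = 1 → E a = X.ν (E (-a)) := by
    intro a ha
    rcases sq_eq_one_iff.mp ha with rfl | rfl
    · rw [hends, X.invol]
    · rw [neg_neg, hends]
  have hcoord : ∀ i : Fin 2, Continuous fun v : S1.carrier => v.1 i :=
    fun i => (PiLp.continuous_apply 2 _ i).comp continuous_subtype_val
  refine ⟨fun v => if 0 ≤ v.1 1 then E (v.1 0) else X.ν (E (-v.1 0)), ?_, fun v => ?_⟩
  · exact Continuous.if_le (hE.comp (hcoord 0)) (X.cont.comp (hE.comp (hcoord 0).neg))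
      continuous_const (hcoord 1) fun v hv =>
        hglue _ (sq_coord_zero_of_coord_one_eq_zero v hv.symm)
  · change (if 0 ≤ -v.1 1 then E (-v.1 0) else X.ν (E (- -v.1 0))) =
      X.ν (if 0 ≤ v.1 1 then _ else _)
    rcases lt_trichotomy (v.1 1) 0 with hv | hv | hv
    · simp [hv.le, hv.not_ge, X.invol]
    · have hsq : (-v.1 0) ^ 2 = 1 := by rw [neg_sq]; exact sq_coord_zero_of_coord_one_eq_zero v hv
      rw [if_pos (by simp [hv]), if_pos hv.ge, hglue _ hsq, neg_neg]
    · simp [hv.le, hv.not_ge]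

theorem z2map_S1_of_exists_joined_ν {X : Z2Space} (h : ∃ x, Joined x (X.ν x)) :
    Z2Map S1 X := by
  obtain ⟨x, ⟨γ⟩⟩ := h
  refine z2map_S1_of_apply_neg_one_eq_ν (E := fun a => γ.extend ((1 - a) / 2))
    (γ.continuous_extend.comp (by fun_prop)) ?_
  norm_num

theorem z2map_S0_of_not_exists_joined_ν {X : Z2Space} [LocallyPathConnectedSpace X.carrier]
    (h : ¬ ∃ x, Joined x (X.ν x)) : Z2Map X S0 :=
  X.z2map_zerothHomotopy.trans (Z2Space.z2map_S0_of_free (Z2Space.zerothHomotopy_free h))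

/-- for a `ℤ/2`-space `X` (a realization of a finite simplicial
complex, so in particular locally path-connected), there is a `ℤ/2`-map
`S¹ → X` iff `X` admits no `ℤ/2`-map to `S⁰`; the intermediate characterization
is the existence of a path from some point `x` to `ν x`. -/
theorem z2map_circle_iff_no_z2map_S0 (X : Z2Space)
    (hX : LocPathConnectedSpace X.carrier) :
    (Z2Map S1 X ↔ ¬ Z2Map X S0) ∧
    (Z2Map S1 X ↔ ∃ x : X.carrier, Joined x (X.ν x)) := by
  have : LocallyPathConnectedSpace X.carrier := hX
  have hS1 : Z2Map S1 X ↔ ∃ x, Joined x (X.ν x) :=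
    ⟨fun f => f.exists_joined_ν exists_joined_ν_S1, z2map_S1_of_exists_joined_ν⟩
  have hS0 : (∃ x, Joined x (X.ν x)) ↔ ¬ Z2Map X S0 :=
    ⟨fun h g => not_exists_joined_ν_S0 (g.exists_joined_ν h),
      fun h => by_contra fun hne => h (z2map_S0_of_not_exists_joined_ν hne)⟩
  exact ⟨hS1.trans hS0, hS1⟩
end
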